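/- Let d, p, L be natural numbers with L ≥ 1, let n : Fin (L+1) → ℕ give hidden layer widths with n 0 interpreted as the input dimension d, and for each layer l let T_l be an affine map from ℝ^{n_{l−1}} to ℝ^{n_l} (given by a matrix and bias vector). Define hidden activations recursively by h_0(x) = x and h_l(x) = relu(T_l(h_{l−1}(x))) applied coordinatewise, where relu(t) = max t 0, and let the network output be f(x) = T_out(h_L(x)) for an affine map T_out : ℝ^{n_L} → ℝ^p. Let S ⊆ ℝ^d be a set of inputs such that for every layer l and every coordinate j, the activation state (T_l(h_{l−1}(x)))_j > 0 is the same for all x ∈ S (i.e. all samples in S share the same activation pattern in every layer). Then there exists an affine map g : ℝ^d → ℝ^p such that f(x) = g(x) for every x ∈ S; that is, the network behaves exactly as an affine (linear) model on S. -/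
import Mathlib


/-- Hidden activations of a ReLU network: `h 0 x = x` and
`h (l+1) x = relu (A l *ᵥ h l x + b l)` coordinatewise. -/
noncomputable def hiddenAct (n : ℕ → ℕ)
    (A : (l : ℕ) → Matrix (Fin (n (l + 1))) (Fin (n l)) ℝ)
    (b : (l : ℕ) → Fin (n (l + 1)) → ℝ) :
    (l : ℕ) → (Fin (n 0) → ℝ) → (Fin (n l) → ℝ)
  | 0, x => x
  | l + 1, x => fun j => max ((A l).mulVec (hiddenAct n A b l x) j + b l j) 0

/-- Pre-activation of hidden layer `l + 1` at input `x`. -/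
noncomputable def preAct (n : ℕ → ℕ)
    (A : (l : ℕ) → Matrix (Fin (n (l + 1))) (Fin (n l)) ℝ)
    (b : (l : ℕ) → Fin (n (l + 1)) → ℝ)
    (l : ℕ) (x : Fin (n 0) → ℝ) : Fin (n (l + 1)) → ℝ :=
  fun j => (A l).mulVec (hiddenAct n A b l x) j + b l j

open Classical in
lemma hiddenAct_affine (n : ℕ → ℕ)
    (A : (l : ℕ) → Matrix (Fin (n (l + 1))) (Fin (n l)) ℝ)
    (b : (l : ℕ) → Fin (n (l + 1)) → ℝ) :
    ∀ (L : ℕ) (S : Set (Fin (n 0) → ℝ)),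
    (∀ l < L, ∀ j, ∀ x ∈ S, ∀ y ∈ S,
      (0 < preAct n A b l x j ↔ 0 < preAct n A b l y j)) →
    ∃ (G : Matrix (Fin (n L)) (Fin (n 0)) ℝ) (g : Fin (n L) → ℝ),
      ∀ x ∈ S, hiddenAct n A b L x = G.mulVec x + g := by
  intro L
  induction L with
  | zero =>
    intro S _
    refine ⟨1, 0, fun x hx => ?_⟩
    simp [hiddenAct, Matrix.one_mulVec]
  | succ L ih =>
    intro S hpat
    obtain ⟨G, g, hGg⟩ := ih S (fun l hl => hpat l (Nat.lt_succ_of_lt hl))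
    rcases Set.eq_empty_or_nonempty S with hS | ⟨x0, hx0⟩
    · exact ⟨0, 0, fun x hx => by simp [hS] at hx⟩
    · refine ⟨fun j => if 0 < preAct n A b L x0 j then fun i => (A L * G) j i else 0,
        fun j => if 0 < preAct n A b L x0 j then (A L).mulVec g j + b L j else 0,
        fun x hx => ?_⟩
      funext j
      have hpre : preAct n A b L x j
          = (A L * G).mulVec x j + ((A L).mulVec g j + b L j) := by
        simp only [preAct, hGg x hx, Matrix.mulVec_add, Pi.add_apply,
          ← Matrix.mulVec_mulVec]
        ring
      have hiff := hpat L (Nat.lt_succ_self L) j x hx x0 hx0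
      show max ((A L).mulVec (hiddenAct n A b L x) j + b L j) 0 = _
      have hpre' : (A L).mulVec (hiddenAct n A b L x) j + b L j = preAct n A b L x j := rfl
      by_cases hc : 0 < preAct n A b L x0 j
      · have hx' : 0 < preAct n A b L x j := hiff.mpr hc
        rw [hpre', max_eq_left hx'.le, hpre]
        simp [Matrix.mulVec, dotProduct, hc]
      · have hx' : ¬ 0 < preAct n A b L x j := fun h => hc (hiff.mp h)
        rw [hpre', max_eq_right (le_of_not_gt hx')]
        simp [Matrix.mulVec, dotProduct, hc]

/-- If all inputs in `S` share the same activation pattern in every hidden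
layer, the ReLU network coincides with an affine map on `S`. -/
theorem relu_network_affine_of_constant_patterns
    (d p L : ℕ) (hL : 1 ≤ L) (n : ℕ → ℕ) (hd : n 0 = d)
    (A : (l : ℕ) → Matrix (Fin (n (l + 1))) (Fin (n l)) ℝ)
    (b : (l : ℕ) → Fin (n (l + 1)) → ℝ)
    (C : Matrix (Fin p) (Fin (n L)) ℝ) (c : Fin p → ℝ)
    (S : Set (Fin (n 0) → ℝ))
    (hpat : ∀ l < L, ∀ j, ∀ x ∈ S, ∀ y ∈ S,
      (0 < preAct n A b l x j ↔ 0 < preAct n A b l y j)) :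
    ∃ (G : Matrix (Fin p) (Fin (n 0)) ℝ) (g : Fin p → ℝ),
      ∀ x ∈ S, C.mulVec (hiddenAct n A b L x) + c = G.mulVec x + g := by
  obtain ⟨G, g, hGg⟩ := hiddenAct_affine n A b L S hpat
  refine ⟨C * G, C.mulVec g + c, fun x hx => ?_⟩
  rw [hGg x hx, Matrix.mulVec_add, ← Matrix.mulVec_mulVec]
  abel
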